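/- Let Γ̂ be a δ-hyperbolic spider's web whose counting measure satisfies c·a^r ≤ μ(B_r(x)) ≤ C·b^r for all vertices x and r ≥ 1, where 1 < a ≤ b < a². Then there exists a constant C' such that for every nonnegative integer r and all subsets E, F of the vertices of Γ̂, a^{−r}·#{(x,y) ∈ E × F : d_{Γ̂}(x,y) ≤ r} ≤ C'·(√b/a)^r·√(#E · #F). -/

import Mathlib

/-! Distances to the root are levels, and the geodesic from the root to `x` runs through the
predecessors of `x`. By the four-point condition the ancestors of `x` and `y` at level
`⌊(x | y)_o⌋₊` are `4δ`-close, so a pair at distance `≤ r` lies in a cell `(h, h')`,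
`h + h' ≤ r + 1`, of pairs whose ancestors `h` and `h'` levels up are `⌊4δ⌋₊`-close. Counting a
cell through its first or its second coordinate with balls of radius `⌊4δ⌋₊ + h'` or
`⌊4δ⌋₊ + h`, it has `O(min (#E b^h', #F b^h))` pairs. Along `h + h' = s` the two geometric
sequences cross at their geometric mean, so the minima sum to `O(√b^s √(#E #F))`, and summing
over `s ≤ r + 1` gives `O(√b^r √(#E #F))`. -/

/-- A spider's web: a graph `G` obtained from a rooted tree `T` (root `o`,
predecessor map `p`, level function `lvl`) by adding edges, such that added edges
only join vertices of the same level, and two same-level neighbours have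
predecessors that coincide or are neighbours. -/
structure SpiderWeb (V : Type*) where
  G : SimpleGraph V
  T : SimpleGraph V
  o : V
  p : V → V
  lvl : V → ℕ
  lvl_root : lvl o = 0
  root_eq : ∀ x, lvl x = 0 → x = o
  p_lvl : ∀ x, x ≠ o → lvl (p x) + 1 = lvl x
  T_adj : ∀ x y, T.Adj x y ↔ (x ≠ o ∧ p x = y) ∨ (y ≠ o ∧ p y = x)
  T_le_G : T ≤ G
  T_connected : T.Connected
  adj_lvl : ∀ x y, G.Adj x y → ¬ T.Adj x y → lvl x = lvl y
  horiz : ∀ x y, G.Adj x y → lvl x = lvl y → p x = p y ∨ G.Adj (p x) (p y)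

noncomputable def gromovProd {V : Type*} (d : V → V → ℕ) (x y w : V) : ℝ :=
  ((d w x : ℝ) + (d w y : ℝ) - (d x y : ℝ)) / 2

open Finset

theorem card_filter_product_le_left {α β : Type*} (s : Finset α) (t : Finset β)
    (R : α → β → Prop) [∀ a b, Decidable (R a b)] {M : ℝ}
    (hM : ∀ a ∈ s, (#(t.filter (R a)) : ℝ) ≤ M) :
    (#((s ×ˢ t).filter fun q => R q.1 q.2) : ℝ) ≤ #s * M := by
  rw [card_filter, sum_product, ← nsmul_eq_mul]
  push_cast
  refine sum_le_card_nsmul _ _ _ fun a ha => ?_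
  simpa only [card_filter, Nat.cast_sum, Nat.cast_ite, Nat.cast_one, Nat.cast_zero] using hM a ha

theorem card_filter_product_le_right {α β : Type*} (s : Finset α) (t : Finset β)
    (R : α → β → Prop) [∀ a b, Decidable (R a b)] {M : ℝ}
    (hM : ∀ b ∈ t, (#(s.filter (R · b)) : ℝ) ≤ M) :
    (#((s ×ˢ t).filter fun q => R q.1 q.2) : ℝ) ≤ #t * M := by
  rw [card_filter, sum_product_right, ← nsmul_eq_mul]
  push_cast
  refine sum_le_card_nsmul _ _ _ fun b hb => ?_
  simpa only [card_filter, Nat.cast_sum, Nat.cast_ite, Nat.cast_one, Nat.cast_zero] using hM b hb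

theorem card_le_ncard_of_coe_subset {α : Type*} {s : Set α} {g : Finset α} (hs : 0 < s.ncard)
    (hg : ↑g ⊆ s) : #g ≤ s.ncard :=
  Set.ncard_coe_finset g ▸ Set.ncard_le_ncard hg (Set.finite_of_ncard_pos hs)

theorem sum_filter_geom_le {b γ Y : ℝ} (hb : 1 < b) (hγ : 0 ≤ γ) (hY : 0 ≤ Y) (n : ℕ) :
    ∑ h ∈ (range n).filter (fun h => γ * b ^ h ≤ Y), γ * b ^ h ≤ Y * (b / (b - 1)) := by
  set A := (range n).filter (fun h => γ * b ^ h ≤ Y)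
  rcases A.eq_empty_or_nonempty with hA | hA
  · rw [hA, sum_empty]; positivity
  have hb1 : 0 < b - 1 := by linarith
  have hM : γ * b ^ A.max' hA ≤ Y := (mem_filter.1 (A.max'_mem hA)).2
  calc ∑ h ∈ A, γ * b ^ h
      ≤ ∑ h ∈ range (A.max' hA + 1), γ * b ^ h := by
        refine sum_le_sum_of_subset_of_nonneg (fun h hh => ?_) fun _ _ _ => by positivity
        exact mem_range.2 (Nat.lt_succ_of_le (A.le_max' h hh))
    _ = γ * ((b ^ (A.max' hA + 1) - 1) / (b - 1)) := by rw [← mul_sum, geom_sum_eq hb.ne']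
    _ ≤ γ * (b ^ (A.max' hA + 1) / (b - 1)) := by gcongr; linarith
    _ = γ * b ^ A.max' hA * (b / (b - 1)) := by rw [pow_succ]; ring
    _ ≤ Y * (b / (b - 1)) := by gcongr

theorem min_le_ite_add_ite {A B X : ℝ} (hB : 0 ≤ B) (hX : 0 ≤ X)
    (hAB : A * B ≤ X ^ 2) :
    min A B ≤ (if A ≤ X then A else 0) + (if B ≤ X then B else 0) := by
  split_ifs with hA hB hB
  · linarith [min_le_left A B]
  · linarith [min_le_left A B]
  · linarith [min_le_right A B]
  · nlinarith

theorem sum_antidiagonal_min_geom_le {b α β : ℝ} (hb : 1 < b) (hα : 0 ≤ α) (hβ : 0 ≤ β)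
    (s : ℕ) :
    ∑ p ∈ antidiagonal s, min (α * b ^ p.2) (β * b ^ p.1) ≤
      2 * b / (b - 1) * √(α * β) * √b ^ s := by
  set X := √(α * β) * √b ^ s
  have hX : 0 ≤ X := by positivity
  have hcapped : ∀ γ : ℝ, 0 ≤ γ →
      ∑ p ∈ antidiagonal s, (if γ * b ^ p.1 ≤ X then γ * b ^ p.1 else 0) ≤ X * (b / (b - 1)) :=
    fun γ hγ => by
      refine (Nat.sum_antidiagonal_eq_sum_range_succ
        (fun i _ => if γ * b ^ i ≤ X then γ * b ^ i else 0) s).trans_le ?_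
      rw [← sum_filter]
      exact sum_filter_geom_le hb hγ hX _
  calc ∑ p ∈ antidiagonal s, min (α * b ^ p.2) (β * b ^ p.1)
      ≤ ∑ p ∈ antidiagonal s, ((if α * b ^ p.swap.1 ≤ X then α * b ^ p.swap.1 else 0) +
          (if β * b ^ p.1 ≤ X then β * b ^ p.1 else 0)) := by
        refine sum_le_sum fun p hp => min_le_ite_add_ite (by positivity) hX (le_of_eq ?_)
        rw [HasAntidiagonal.mem_antidiagonal] at hp
        rw [mul_pow, ← pow_mul, pow_mul', Real.sq_sqrt (by positivity : (0 : ℝ) ≤ b),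
          Real.sq_sqrt (by positivity), ← hp, pow_add]
        ring
    _ ≤ X * (b / (b - 1)) + X * (b / (b - 1)) := by
        rw [sum_add_distrib, Nat.sum_antidiagonal_swap (f := fun p =>
          if α * b ^ p.1 ≤ X then α * b ^ p.1 else 0)]
        exact add_le_add (hcapped α hα) (hcapped β hβ)
    _ = 2 * b / (b - 1) * √(α * β) * √b ^ s := by ring

theorem gromovProd_dist_comm {V : Type*} (G : SimpleGraph V) (x y w : V) :
    gromovProd G.dist x y w = gromovProd G.dist y x w := by
  rw [gromovProd, gromovProd, SimpleGraph.dist_comm (u := x)]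
  ring

theorem gromovProd_dist_nonneg {V : Type*} {G : SimpleGraph V} (hG : G.Connected) (x y w : V) :
    0 ≤ gromovProd G.dist x y w := by
  have : (G.dist x y : ℝ) ≤ G.dist w x + G.dist w y := by
    rw [SimpleGraph.dist_comm (u := w) (v := x)]; exact_mod_cast hG.dist_triangle
  rw [gromovProd]
  linarith

def IsGromovHyperbolic {V : Type*} (d : V → V → ℕ) (δ : ℝ) : Prop :=
  ∀ w x y z : V, gromovProd d x z w ≥ min (gromovProd d x y w) (gromovProd d y z w) - δ

namespace SpiderWeb

variable {V : Type*} (S : SpiderWeb V)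

theorem connected : S.G.Connected := S.T_connected.mono S.T_le_G

theorem lvl_le_of_adj {x y : V} (h : S.G.Adj x y) : S.lvl y ≤ S.lvl x + 1 := by
  by_cases ht : S.T.Adj x y
  · rcases (S.T_adj x y).1 ht with ⟨hx, rfl⟩ | ⟨hy, rfl⟩
    · have := S.p_lvl x hx; omega
    · have := S.p_lvl y hy; omega
  · rw [S.adj_lvl x y h ht]; omega

theorem lvl_le_add_length {x y : V} (w : S.G.Walk x y) : S.lvl y ≤ S.lvl x + w.length := by
  induction w with
  | nil => simp
  | cons h _ ih =>
    rw [SimpleGraph.Walk.length_cons]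
    have := S.lvl_le_of_adj h
    omega

theorem lvl_le_add_dist (x y : V) : S.lvl y ≤ S.lvl x + S.G.dist x y := by
  obtain ⟨w, hw⟩ := S.connected.exists_walk_length_eq_dist x y
  exact hw ▸ S.lvl_le_add_length w

theorem lvl_iterate_p {x : V} {j : ℕ} (hj : j ≤ S.lvl x) :
    S.lvl (S.p^[j] x) = S.lvl x - j := by
  induction j with
  | zero => rfl
  | succ n ih =>
    have hn := ih (by omega)
    have hne : S.p^[n] x ≠ S.o := fun he => by
      have := S.lvl_root; rw [← he] at this; omega
    rw [Function.iterate_succ_apply']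
    have := S.p_lvl _ hne
    omega

theorem dist_iterate_p_le {x : V} {j : ℕ} (hj : j ≤ S.lvl x) :
    S.G.dist x (S.p^[j] x) ≤ j := by
  induction j with
  | zero => simp
  | succ n ih =>
    have hne : S.p^[n] x ≠ S.o := fun he => by
      have := S.lvl_iterate_p (x := x) (j := n) (by omega)
      rw [he, S.lvl_root] at this; omega
    have hadj : S.G.Adj (S.p^[n] x) (S.p^[n + 1] x) := by
      rw [Function.iterate_succ_apply']
      exact S.T_le_G ((S.T_adj _ _).2 (Or.inl ⟨hne, rfl⟩))
    calc S.G.dist x (S.p^[n + 1] x)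
        ≤ S.G.dist x (S.p^[n] x) + S.G.dist (S.p^[n] x) (S.p^[n + 1] x) :=
          S.connected.dist_triangle
      _ ≤ n + 1 := by rw [SimpleGraph.dist_eq_one_iff_adj.2 hadj]; grind

theorem dist_iterate_p {x : V} {j : ℕ} (hj : j ≤ S.lvl x) :
    S.G.dist x (S.p^[j] x) = j := by
  have := S.lvl_le_add_dist (S.p^[j] x) x
  rw [S.lvl_iterate_p hj, SimpleGraph.dist_comm] at this
  have := S.dist_iterate_p_le hj
  omega

theorem dist_root (x : V) : S.G.dist S.o x = S.lvl x := by
  have hroot : S.p^[S.lvl x] x = S.o := S.root_eq _ (by rw [S.lvl_iterate_p le_rfl, Nat.sub_self])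
  have := S.dist_iterate_p (le_refl (S.lvl x))
  rwa [hroot, SimpleGraph.dist_comm] at this

theorem dist_le_add_of_dist_iterate_p_le {u y : V} {h ρ : ℕ} (hh : h ≤ S.lvl y)
    (hu : S.G.dist u (S.p^[h] y) ≤ ρ) : S.G.dist u y ≤ ρ + h := by
  have := S.connected.dist_triangle (u := u) (v := S.p^[h] y) (w := y)
  rw [SimpleGraph.dist_comm (u := S.p^[h] y), S.dist_iterate_p hh] at this
  omega

theorem gromovProd_root_iterate_p {x : V} {k : ℕ} (hk : k ≤ S.lvl x) :
    gromovProd S.G.dist x (S.p^[S.lvl x - k] x) S.o = k := by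
  have hlvl : S.lvl (S.p^[S.lvl x - k] x) = k := by rw [S.lvl_iterate_p (by omega)]; omega
  rw [gromovProd, S.dist_root, S.dist_root, hlvl, S.dist_iterate_p (by omega),
    Nat.cast_sub hk]
  ring

theorem gromovProd_root_le_lvl (x y : V) : gromovProd S.G.dist x y S.o ≤ S.lvl x := by
  have : (S.lvl y : ℝ) ≤ S.lvl x + S.G.dist x y := by exact_mod_cast S.lvl_le_add_dist x y
  rw [gromovProd, S.dist_root, S.dist_root]
  linarith

/-- For the ancestors `u`, `v` of `x`, `y` at level `k` we have `(u | x)_o = (y | v)_o = k`, so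
two applications of the four-point condition give `(u | v)_o ≥ k - 2δ`. -/
theorem dist_ancestors_le {δ : ℝ} (hδ : 0 ≤ δ) (hhyp : IsGromovHyperbolic S.G.dist δ)
    {x y : V} {k : ℕ} (hkx : k ≤ S.lvl x) (hky : k ≤ S.lvl y)
    (hk : (k : ℝ) ≤ gromovProd S.G.dist x y S.o) :
    (S.G.dist (S.p^[S.lvl x - k] x) (S.p^[S.lvl y - k] y) : ℝ) ≤ 4 * δ := by
  set u := S.p^[S.lvl x - k] x
  set v := S.p^[S.lvl y - k] y
  have hux : gromovProd S.G.dist u x S.o = k := by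
    rw [gromovProd_dist_comm]; exact S.gromovProd_root_iterate_p hkx
  have hyv : gromovProd S.G.dist y v S.o = k := S.gromovProd_root_iterate_p hky
  have hxv : (k : ℝ) - δ ≤ gromovProd S.G.dist x v S.o := by
    have := hhyp S.o x y v
    rw [hyv] at this
    linarith [le_min hk (le_refl (k : ℝ))]
  have huv : (k : ℝ) - 2 * δ ≤ gromovProd S.G.dist u v S.o := by
    have := hhyp S.o u x v
    rw [hux] at this
    linarith [le_min (by linarith : (k : ℝ) - δ ≤ k) hxv]
  have hu : S.G.dist S.o u = k := by rw [S.dist_root, S.lvl_iterate_p (by omega)]; omega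
  have hv : S.G.dist S.o v = k := by rw [S.dist_root, S.lvl_iterate_p (by omega)]; omega
  rw [gromovProd, hu, hv] at huv
  linarith

/-- The ancestors at level `k = ⌊(x | y)_o⌋₊` are `h = lvl x - k` and `h' = lvl y - k` levels up,
and `h + h' = d(x, y) + 2 ((x | y)_o - k) < d(x, y) + 2`. -/
theorem exists_close_ancestors {δ : ℝ} (hδ : 0 ≤ δ) (hhyp : IsGromovHyperbolic S.G.dist δ)
    {x y : V} {r : ℕ} (hxy : S.G.dist x y ≤ r) :
    ∃ h h', h ≤ S.lvl x ∧ h' ≤ S.lvl y ∧ h + h' < r + 2 ∧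
      S.G.dist (S.p^[h] x) (S.p^[h'] y) ≤ ⌊4 * δ⌋₊ := by
  set g := gromovProd S.G.dist x y S.o
  set k := ⌊g⌋₊
  have hkx : k ≤ S.lvl x := Nat.floor_le_of_le (S.gromovProd_root_le_lvl x y)
  have hky : k ≤ S.lvl y := by
    refine Nat.floor_le_of_le ?_
    rw [show g = _ from gromovProd_dist_comm S.G x y S.o]
    exact S.gromovProd_root_le_lvl y x
  refine ⟨S.lvl x - k, S.lvl y - k, Nat.sub_le _ _, Nat.sub_le _ _, ?_, ?_⟩
  · have hg : 2 * g = S.lvl x + S.lvl y - S.G.dist x y := by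
      simp only [g, gromovProd, S.dist_root]; ring
    have hgk : g < k + 1 := Nat.lt_floor_add_one g
    have hr : (S.G.dist x y : ℝ) ≤ r := by exact_mod_cast hxy
    have : ((S.lvl x - k + (S.lvl y - k) : ℕ) : ℝ) < r + 2 := by
      push_cast [Nat.cast_sub hkx, Nat.cast_sub hky]
      linarith
    exact_mod_cast this
  · exact Nat.le_floor <| S.dist_ancestors_le hδ hhyp hkx hky <|
      Nat.floor_le (gromovProd_dist_nonneg S.connected x y S.o)

def AncestorsClose (Δ h h' : ℕ) (x y : V) : Prop :=
  h ≤ S.lvl x ∧ h' ≤ S.lvl y ∧ S.G.dist (S.p^[h] x) (S.p^[h'] y) ≤ Δ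

noncomputable instance (Δ h h' : ℕ) (x y : V) : Decidable (S.AncestorsClose Δ h h' x y) :=
  inferInstanceAs (Decidable (_ ∧ _ ∧ _))

variable {S}

theorem card_ancestorsClose_le_left {C₀ b : ℝ}
    (hball : ∀ (x : V) (ρ : ℕ) (g : Finset V), (∀ y ∈ g, S.G.dist x y ≤ ρ) → (#g : ℝ) ≤ C₀ * b ^ ρ)
    (e f : Finset V) (Δ h h' : ℕ) :
    (#((e ×ˢ f).filter fun q => S.AncestorsClose Δ h h' q.1 q.2) : ℝ) ≤
      #e * (C₀ * b ^ (Δ + h')) :=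
  card_filter_product_le_left _ _ _ fun x _ => hball (S.p^[h] x) _ _ fun y hy => by
    obtain ⟨-, hy, hd⟩ := (mem_filter.1 hy).2
    exact S.dist_le_add_of_dist_iterate_p_le hy hd

theorem card_ancestorsClose_le_right {C₀ b : ℝ}
    (hball : ∀ (x : V) (ρ : ℕ) (g : Finset V), (∀ y ∈ g, S.G.dist x y ≤ ρ) → (#g : ℝ) ≤ C₀ * b ^ ρ)
    (e f : Finset V) (Δ h h' : ℕ) :
    (#((e ×ˢ f).filter fun q => S.AncestorsClose Δ h h' q.1 q.2) : ℝ) ≤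
      #f * (C₀ * b ^ (Δ + h)) :=
  card_filter_product_le_right _ _ _ fun y _ => hball (S.p^[h'] y) _ _ fun x hx => by
    obtain ⟨hx, -, hd⟩ := (mem_filter.1 hx).2
    rw [SimpleGraph.dist_comm] at hd
    exact S.dist_le_add_of_dist_iterate_p_le hx hd

theorem card_filter_dist_le_sum_ancestorsClose {δ : ℝ} (hδ : 0 ≤ δ)
    (hhyp : IsGromovHyperbolic S.G.dist δ) (r : ℕ) (e f : Finset V) :
    (#((e ×ˢ f).filter fun q => S.G.dist q.1 q.2 ≤ r) : ℝ) ≤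
      ∑ s ∈ range (r + 2), ∑ p ∈ antidiagonal s,
        (#((e ×ˢ f).filter fun q => S.AncestorsClose ⌊4 * δ⌋₊ p.1 p.2 q.1 q.2) : ℝ) := by
  classical
  set cell := fun c : (_ : ℕ) × ℕ × ℕ =>
    (e ×ˢ f).filter fun q => S.AncestorsClose ⌊4 * δ⌋₊ c.2.1 c.2.2 q.1 q.2
  have hcover : (e ×ˢ f).filter (fun q => S.G.dist q.1 q.2 ≤ r) ⊆
      ((range (r + 2)).sigma fun s => antidiagonal s).biUnion cell := by
    intro q hq
    obtain ⟨hqef, hqr⟩ := mem_filter.1 hq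
    obtain ⟨h, h', hh, hh', hsum, hd⟩ := S.exists_close_ancestors hδ hhyp hqr
    exact mem_biUnion.2 ⟨⟨h + h', h, h'⟩,
      mem_sigma.2 ⟨mem_range.2 hsum, HasAntidiagonal.mem_antidiagonal.2 rfl⟩,
      mem_filter.2 ⟨hqef, hh, hh', hd⟩⟩
  calc _ ≤ ∑ c ∈ (range (r + 2)).sigma (fun s => antidiagonal s), (#(cell c) : ℝ) := by
        exact_mod_cast (card_le_card hcover).trans card_biUnion_le
    _ = _ := sum_sigma _ _ _

theorem exists_card_filter_dist_le {δ C₀ b : ℝ} (hδ : 0 ≤ δ)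
    (hhyp : IsGromovHyperbolic S.G.dist δ) (hb : 1 < b) (hC₀ : 0 < C₀)
    (hball : ∀ (x : V) (ρ : ℕ) (g : Finset V), (∀ y ∈ g, S.G.dist x y ≤ ρ) →
      (#g : ℝ) ≤ C₀ * b ^ ρ) :
    ∃ K : ℝ, 0 < K ∧ ∀ (r : ℕ) (e f : Finset V),
      (#((e ×ˢ f).filter fun q => S.G.dist q.1 q.2 ≤ r) : ℝ) ≤ K * √b ^ r * √(#e * #f) := by
  set D := C₀ * b ^ ⌊4 * δ⌋₊
  have hb1 : 0 < b - 1 := by linarith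
  have hσ : 1 < √b := by rwa [Real.lt_sqrt zero_le_one, one_pow]
  refine ⟨2 * b / (b - 1) * D * (√b ^ 2 / (√b - 1)), ?_, fun r e f => ?_⟩
  · have : 0 < √b - 1 := by linarith
    positivity
  have hcell : ∀ h h', (#((e ×ˢ f).filter fun q => S.AncestorsClose ⌊4 * δ⌋₊ h h' q.1 q.2) : ℝ) ≤
      min (#e * D * b ^ h') (#f * D * b ^ h) := fun h h' => by
    refine le_min ((card_ancestorsClose_le_left hball e f _ h h').trans_eq ?_)
      ((card_ancestorsClose_le_right hball e f _ h h').trans_eq ?_) <;> rw [pow_add] <;> ring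
  have hαβ : √(#e * D * (#f * D)) = D * √(#e * #f) := by
    rw [show (#e : ℝ) * D * (#f * D) = D ^ 2 * (#e * #f) by ring, Real.sqrt_mul (by positivity),
      Real.sqrt_sq (by positivity)]
  have hgeom : ∑ s ∈ range (r + 2), √b ^ s ≤ √b ^ (r + 2) / (√b - 1) := by
    rw [geom_sum_eq hσ.ne']
    gcongr
    linarith
  calc (#((e ×ˢ f).filter fun q => S.G.dist q.1 q.2 ≤ r) : ℝ)
      ≤ ∑ s ∈ range (r + 2), ∑ p ∈ antidiagonal s, min (#e * D * b ^ p.2) (#f * D * b ^ p.1) :=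
        (card_filter_dist_le_sum_ancestorsClose hδ hhyp r e f).trans <|
          sum_le_sum fun s _ => sum_le_sum fun p _ => hcell p.1 p.2
    _ ≤ ∑ s ∈ range (r + 2), 2 * b / (b - 1) * (D * √(#e * #f)) * √b ^ s := by
        refine sum_le_sum fun s _ => ?_
        rw [← hαβ]
        exact sum_antidiagonal_min_geom_le hb (by positivity) (by positivity) s
    _ ≤ 2 * b / (b - 1) * (D * √(#e * #f)) * (√b ^ (r + 2) / (√b - 1)) := by
        rw [← mul_sum]
        exact mul_le_mul_of_nonneg_left hgeom (by positivity)
    _ = 2 * b / (b - 1) * D * (√b ^ 2 / (√b - 1)) * √b ^ r * √(#e * #f) := by ring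

end SpiderWeb

theorem stmt_10_general {V : Type*} (S : SpiderWeb V) (δ a b c C : ℝ) (hδ : 0 ≤ δ)
    (ha : 1 < a) (hab : a ≤ b) (hc : 0 < c) (hC : 0 < C)
    (hhyp : ∀ w x y z : V,
      gromovProd S.G.dist x z w ≥
        min (gromovProd S.G.dist x y w) (gromovProd S.G.dist y z w) - δ)
    (hvol : ∀ (x : V) (r : ℕ), 1 ≤ r →
      c * a ^ r ≤ (({z | S.G.dist x z ≤ r} : Set V).ncard : ℝ) ∧
        (({z | S.G.dist x z ≤ r} : Set V).ncard : ℝ) ≤ C * b ^ r) :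
    ∃ C' : ℝ, 0 < C' ∧ ∀ (r : ℕ) (E F : Set V), E.Finite → F.Finite →
      (({q : V × V | q.1 ∈ E ∧ q.2 ∈ F ∧ S.G.dist q.1 q.2 ≤ r} : Set (V × V)).ncard : ℝ)
          / a ^ r ≤
        C' * (Real.sqrt b / a) ^ r * Real.sqrt ((E.ncard : ℝ) * (F.ncard : ℝ)) := by
  have hb : 1 < b := ha.trans_le hab
  -- `hvol` only covers radii `≥ 1`, and its lower bound is what makes balls finite.
  have hball : ∀ (x : V) (ρ : ℕ) (g : Finset V), (∀ y ∈ g, S.G.dist x y ≤ ρ) →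
      (#g : ℝ) ≤ C * b * b ^ ρ := fun x ρ g hg => by
    obtain ⟨hlow, hup⟩ := hvol x (ρ + 1) le_add_self
    have hpos : 0 < {z | S.G.dist x z ≤ ρ + 1}.ncard := by
      exact_mod_cast (by positivity : 0 < c * a ^ (ρ + 1)).trans_le hlow
    calc (#g : ℝ) ≤ {z | S.G.dist x z ≤ ρ + 1}.ncard := Nat.cast_le.2 <|
          card_le_ncard_of_coe_subset hpos fun y hy => (hg y hy).trans ρ.le_succ
      _ ≤ C * b * b ^ ρ := hup.trans_eq (by ring)
  obtain ⟨K, hK, hcount⟩ := SpiderWeb.exists_card_filter_dist_le hδ hhyp hb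
    (by positivity) hball
  refine ⟨K, hK, fun r E F hE hF => ?_⟩
  have hset : {q : V × V | q.1 ∈ E ∧ q.2 ∈ F ∧ S.G.dist q.1 q.2 ≤ r} =
      ↑((hE.toFinset ×ˢ hF.toFinset).filter fun q => S.G.dist q.1 q.2 ≤ r) := by
    ext q
    simp [and_assoc]
  rw [hset, Set.ncard_coe_finset, Set.ncard_eq_toFinset_card E hE,
    Set.ncard_eq_toFinset_card F hF, div_pow, div_le_iff₀ (by positivity)]
  calc _ ≤ K * √b ^ r * √(#hE.toFinset * #hF.toFinset) := hcount r _ _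
    _ = _ := by field_simp

/-- In a δ-hyperbolic spider's web with `c·a^r ≤ #B_r(x) ≤ C·b^r`
(`1 < a ≤ b < a²`), the bilinear estimate
`a^{-r}·#{(x,y) ∈ E×F : d(x,y) ≤ r} ≤ C'·(√b/a)^r·√(#E·#F)` holds. -/
theorem stmt_10 {V : Type*} (S : SpiderWeb V) (δ a b c C : ℝ) (hδ : 0 ≤ δ)
    (ha : 1 < a) (hab : a ≤ b) (hb : b < a ^ 2) (hc : 0 < c) (hC : 0 < C)
    (hhyp : ∀ w x y z : V,
      gromovProd S.G.dist x z w ≥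
        min (gromovProd S.G.dist x y w) (gromovProd S.G.dist y z w) - δ)
    (hvol : ∀ (x : V) (r : ℕ), 1 ≤ r →
      c * a ^ r ≤ (({z | S.G.dist x z ≤ r} : Set V).ncard : ℝ) ∧
        (({z | S.G.dist x z ≤ r} : Set V).ncard : ℝ) ≤ C * b ^ r) :
    ∃ C' : ℝ, 0 < C' ∧ ∀ (r : ℕ) (E F : Set V), E.Finite → F.Finite →
      (({q : V × V | q.1 ∈ E ∧ q.2 ∈ F ∧ S.G.dist q.1 q.2 ≤ r} : Set (V × V)).ncard : ℝ)
          / a ^ r ≤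
        C' * (Real.sqrt b / a) ^ r * Real.sqrt ((E.ncard : ℝ) * (F.ncard : ℝ)) :=
  stmt_10_general S δ a b c C hδ ha hab hc hC hhyp hvol
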